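/- For 0 ≤ V ≤ 1/√2, the Mermin family admits the decomposition P(abc|xyz) = (1/4) Σ_{λ=0}^{3} P_λ(ab|xy) · D_λ(c|z) where D_λ(c|z) is the deterministic distribution c = αz⊕β for λ=2α+β, and the P_λ(ab|xy) are the four explicitly given bipartite distributions of the form (1 ± (-1)^{a⊕b} V)/4 depending on (x,y) as in the paper's tables; each P_λ is a valid probability distribution. -/

import Mathlib

/-!
Take `P_{(α,β)}(ab|xy) = (1 + (-1)^{a⊕b⊕β⊕xy⊕α(x⊕y⊕1)} V) / 4`. Since `D_{(α,β)}(c|z)`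
selects `β = c ⊕ αz`, the mixture is `(1/16) Σ_α (1 + (-1)^{a⊕b⊕c⊕xy⊕α(x⊕y⊕1⊕z)} V)`, and the sum
over `α` kills the `V` term unless `z = x⊕y⊕1`. In that case the Mermin sign `xy⊕yz⊕xz` reduces to
`xy`, because `(x⊕y)(x⊕y⊕1) = 0`. Each box is a probability distribution as soon as `|V| ≤ 1`.
-/

/-- The Mermin family of tripartite correlations. -/
noncomputable def mP (V : ℝ) (a b c x y z : Fin 2) : ℝ :=
  (1 + (-1 : ℝ) ^ ((a + b + c + x * y + y * z + x * z : Fin 2) : ℕ) *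
    (if x + y + 1 = z then V else 0)) / 8

/-- The deterministic distribution `D_{(α,β)}(c|z)`, equal to 1 iff `c = α·z ⊕ β`. -/
def Ddet (l : Fin 2 × Fin 2) (c z : Fin 2) : ℝ := if c = l.1 * z + l.2 then 1 else 0

open Finset Fin.CommRing

theorem neg_one_pow_val_add {R : Type*} [Ring R] (m n : Fin 2) :
    (-1 : R) ^ ((m + n : Fin 2) : ℕ) = (-1) ^ (m : ℕ) * (-1) ^ (n : ℕ) := by
  rw [Fin.val_add, ← neg_one_pow_eq_pow_mod_two, pow_add]

theorem sum_mul_Ddet (f : Fin 2 × Fin 2 → ℝ) (c z : Fin 2) :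
    ∑ l, f l * Ddet l c z = ∑ α, f (α, c + α * z) := by
  rw [Fintype.sum_prod_type]
  refine sum_congr rfl fun α _ => ?_
  simp [Ddet, add_comm (α * z), CharTwo.eq_add_iff_add_eq]

noncomputable def signedBox (V : ℝ) (s a b : Fin 2) : ℝ :=
  (1 + (-1 : ℝ) ^ ((a + b + s : Fin 2) : ℕ) * V) / 4

theorem signedBox_nonneg {V : ℝ} (hV : |V| ≤ 1) (s a b : Fin 2) : 0 ≤ signedBox V s a b := by
  rw [abs_le] at hV
  rcases neg_one_pow_eq_or ℝ ((a + b + s : Fin 2) : ℕ) with h | h <;>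
    rw [signedBox, h] <;> linarith

theorem sum_signedBox (V : ℝ) (s : Fin 2) : ∑ a, ∑ b, signedBox V s a b = 1 := by
  fin_cases s <;> simp [signedBox, Fin.sum_univ_two] <;> ring

theorem signedBox_mul_eq_ite (V : ℝ) (x y a b : Fin 2) :
    signedBox V (x * y) a b =
      if x = 1 ∧ y = 1 then (1 - (-1 : ℝ) ^ ((a + b : Fin 2) : ℕ) * V) / 4
      else (1 + (-1 : ℝ) ^ ((a + b : Fin 2) : ℕ) * V) / 4 := by
  rw [signedBox, neg_one_pow_val_add]
  fin_cases x <;> fin_cases y <;> simp [sub_eq_add_neg]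

theorem sum_signedBox_add_mul (V : ℝ) (t s a b : Fin 2) :
    ∑ α : Fin 2, signedBox V (t + α * s) a b =
      (1 + (-1 : ℝ) ^ ((a + b + t : Fin 2) : ℕ) * (if s = 0 then V else 0)) / 2 := by
  simp only [signedBox, Fin.sum_univ_two, zero_mul, one_mul, add_zero, ← add_assoc]
  fin_cases s
  · simp; ring
  · simp [neg_one_pow_val_add (a + b + t) 1]; ring

theorem mP_eq_sum_signedBox_mul_Ddet (V : ℝ) (a b c x y z : Fin 2) :
    mP V a b c x y z = (1 / 4) * ∑ l : Fin 2 × Fin 2,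
      signedBox V (l.2 + x * y + l.1 * (x + y + 1)) a b * Ddet l c z := by
  have hs : ∀ α : Fin 2,
      c + α * z + x * y + α * (x + y + 1) = (c + x * y) + α * (x + y + 1 + z) :=
    fun α => by ring
  simp only [sum_mul_Ddet, hs, sum_signedBox_add_mul, mP]
  by_cases h : x + y + 1 = z
  · subst h
    have hsign : a + b + c + x * y + y * (x + y + 1) + x * (x + y + 1) = a + b + (c + x * y) := by
      revert a b c x y; decide
    simp only [CharTwo.add_self_eq_zero, hsign]
    ring
  · simp only [h, mt CharTwo.add_eq_zero.mp h, if_false]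
    ring

theorem stmt8 (V : ℝ) (h0 : 0 ≤ V) (h1 : V ≤ 1 / Real.sqrt 2) :
    ∃ P : Fin 2 × Fin 2 → Fin 2 → Fin 2 → Fin 2 → Fin 2 → ℝ,
      (∀ l a b x y, 0 ≤ P l a b x y) ∧
      (∀ l x y, ∑ a : Fin 2, ∑ b : Fin 2, P l a b x y = 1) ∧
      (∀ a b x y : Fin 2, P (0, 0) a b x y =
        if x = 1 ∧ y = 1 then (1 - (-1 : ℝ) ^ ((a + b : Fin 2) : ℕ) * V) / 4
        else (1 + (-1 : ℝ) ^ ((a + b : Fin 2) : ℕ) * V) / 4) ∧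
      (∀ a b c x y z : Fin 2,
        mP V a b c x y z = (1 / 4) * ∑ l : Fin 2 × Fin 2, P l a b x y * Ddet l c z) := by
  have hV : |V| ≤ 1 := by
    refine abs_le.mpr ⟨by linarith, h1.trans ?_⟩
    rw [div_le_one (by positivity)]
    exact Real.one_le_sqrt.mpr one_le_two
  refine ⟨fun l a b x y => signedBox V (l.2 + x * y + l.1 * (x + y + 1)) a b,
    fun _ _ _ _ _ => signedBox_nonneg hV _ _ _, fun _ _ _ => sum_signedBox V _,
    fun a b x y => ?_, mP_eq_sum_signedBox_mul_Ddet V⟩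
  simpa using signedBox_mul_eq_ite V x y a b
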